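/- arXiv:1812.07788 — 4 statements merged into one kernel-verified Lean document; each statement's English description precedes it below -/
import Mathlib

section
/- Assume ad < bc, b > 0, d > 0, and let λ, μ : [a/b, c/d] → ℝ be continuous with λ(x) ≥ C > 0 and μ(x) ≥ C > 0. Fix x₀ ∈ (a/b, c/d) and define h(x) = exp(∫_{x₀}^x (λ(y)/(by−a) − μ(y)/(c−dy)) dy) for x ∈ (a/b, c/d). Then h(x) → 0 as x → a/b⁺ and h(x) → 0 as x → c/d⁻. -/
/-!
Near `a/b` the integrand is at least `(C/b)/(y - a/b) - K`, since `λ ≥ C` and the `μ`-term is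
bounded on `[a/b, x₀]`; comparing with the primitive `(C/b) log (y - a/b) - K y` shows that
`∫_{x₀}^x` tends to `-∞` as `x → a/b⁺`. Symmetrically, near `c/d` the integrand is at most
`K - (C/d)/(c/d - y)`. Hence `h = exp (∫ …)` tends to `0` at both endpoints.
-/

open Set Filter MeasureTheory intervalIntegral Topology Real

lemma tendsto_log_sub_nhdsGT (p : ℝ) : Tendsto (fun x => log (x - p)) (𝓝[>] p) atBot := by
  have h : Tendsto (· - p) (𝓝[>] p) (𝓝[>] 0) := by
    simpa using (continuous_sub_right p).continuousWithinAt.tendsto_nhdsWithin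
      (x := p) (s := Ioi p) (t := Ioi 0) fun x hx => sub_pos.2 hx
  exact tendsto_log_nhdsGT_zero.comp h

lemma tendsto_log_sub_nhdsLT (q : ℝ) : Tendsto (fun x => log (q - x)) (𝓝[<] q) atBot := by
  have h : Tendsto (q - ·) (𝓝[<] q) (𝓝[>] 0) := by
    simpa using (continuous_sub_left q).continuousWithinAt.tendsto_nhdsWithin
      (x := q) (s := Iio q) (t := Ioi 0) fun x hx => sub_pos.2 hx
  exact tendsto_log_nhdsGT_zero.comp h

theorem tendsto_integral_nhdsGT_atBot {f : ℝ → ℝ} {p x₀ k K : ℝ} (hp : p < x₀) (hk : 0 < k)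
    (hf : ContinuousOn f (Ioc p x₀)) (hbd : ∀ y ∈ Ioc p x₀, k / (y - p) - K ≤ f y) :
    Tendsto (fun x => ∫ y in x₀..x, f y) (𝓝[>] p) atBot := by
  set G : ℝ → ℝ := fun x => k * log (x - p) - K * x
  have hG : Tendsto G (𝓝[>] p) atBot :=
    ((tendsto_log_sub_nhdsGT p).const_mul_atBot hk).atBot_add
      ((continuous_const_mul (-K)).continuousWithinAt.tendsto.congr fun x => by ring)
  have hG' : ∀ y, p < y → HasDerivAt G (k / (y - p) - K) y := fun y hy =>
    ((((hasDerivAt_id' y).sub_const p).log (sub_pos.2 hy).ne').const_mul k |>.sub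
      ((hasDerivAt_id' y).const_mul K)).congr_deriv (by ring)
  refine tendsto_atBot_mono' _ ?_ (tendsto_atBot_add_const_right _ (-G x₀) hG)
  filter_upwards [Ioo_mem_nhdsGT hp] with x hx
  have hsub : Icc x x₀ ⊆ Ioc p x₀ := Icc_subset_Ioc hx.1 le_rfl
  have hG_le := sub_le_integral_of_hasDeriv_right_of_le hx.2.le
    (fun y hy => (hG' y (hsub hy).1).continuousAt.continuousWithinAt)
    (fun y hy => (hG' y (hsub (Ioo_subset_Icc_self hy)).1).hasDerivWithinAt)
    (hf.mono hsub).integrableOn_Icc (fun y hy => hbd y (hsub (Ioo_subset_Icc_self hy)))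
  rw [integral_symm]
  linarith

theorem tendsto_integral_nhdsLT_atBot {f : ℝ → ℝ} {q x₀ k K : ℝ} (hq : x₀ < q) (hk : 0 < k)
    (hf : ContinuousOn f (Ico x₀ q)) (hbd : ∀ y ∈ Ico x₀ q, f y ≤ K - k / (q - y)) :
    Tendsto (fun x => ∫ y in x₀..x, f y) (𝓝[<] q) atBot := by
  set G : ℝ → ℝ := fun x => k * log (q - x) + K * x
  have hG : Tendsto G (𝓝[<] q) atBot :=
    ((tendsto_log_sub_nhdsLT q).const_mul_atBot hk).atBot_add
      (continuous_const_mul K).continuousWithinAt.tendsto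
  have hG' : ∀ y, y < q → HasDerivAt G (K - k / (q - y)) y := fun y hy =>
    ((((hasDerivAt_id' y).const_sub q).log (sub_pos.2 hy).ne').const_mul k |>.add
      ((hasDerivAt_id' y).const_mul K)).congr_deriv (by ring)
  refine tendsto_atBot_mono' _ ?_ (tendsto_atBot_add_const_right _ (-G x₀) hG)
  filter_upwards [Ioo_mem_nhdsLT hq] with x hx
  have hsub : Icc x₀ x ⊆ Ico x₀ q := Icc_subset_Ico le_rfl hx.2
  have hG_ge := integral_le_sub_of_hasDeriv_right_of_le hx.1.le
    (fun y hy => (hG' y (hsub hy).2).continuousAt.continuousWithinAt)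
    (fun y hy => (hG' y (hsub (Ioo_subset_Icc_self hy)).2).hasDerivWithinAt)
    (hf.mono hsub).integrableOn_Icc (fun y hy => hbd y (hsub (Ioo_subset_Icc_self hy)))
  linarith

theorem stmt_3_general (a b c d C x₀ : ℝ) (lam μ : ℝ → ℝ)
    (hb : 0 < b) (hd : 0 < d) (hC : 0 < C)
    (hlam_cont : ContinuousOn lam (Icc (a/b) (c/d)))
    (hμ_cont : ContinuousOn μ (Icc (a/b) (c/d)))
    (hlam : ∀ x ∈ Icc (a/b) (c/d), C ≤ lam x)
    (hμ : ∀ x ∈ Icc (a/b) (c/d), C ≤ μ x)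
    (hx₀ : x₀ ∈ Ioo (a/b) (c/d))
    (h : ℝ → ℝ)
    (hdef : ∀ x ∈ Ioo (a/b) (c/d),
      h x = Real.exp (∫ y in x₀..x, (lam y / (b*y - a) - μ y / (c - d*y)))) :
    Tendsto h (nhdsWithin (a/b) (Ioi (a/b))) (nhds 0) ∧
    Tendsto h (nhdsWithin (c/d) (Iio (c/d))) (nhds 0) := by
  set f : ℝ → ℝ := fun y => lam y / b / (y - a/b) - μ y / d / (c/d - y)
  have hf : ∀ y, lam y / (b*y - a) - μ y / (c - d*y) = f y := fun y => by
    dsimp only [f]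
    rw [div_div, div_div, mul_sub, mul_sub, mul_div_cancel₀ _ hb.ne', mul_div_cancel₀ _ hd.ne']
  simp only [hf] at hdef
  have hf_cont : ContinuousOn f (Ioo (a/b) (c/d)) :=
    ((hlam_cont.mono Ioo_subset_Icc_self).div_const b |>.div (by fun_prop)
      fun y hy => (sub_pos.2 hy.1).ne').sub
    ((hμ_cont.mono Ioo_subset_Icc_self).div_const d |>.div (by fun_prop)
      fun y hy => (sub_pos.2 hy.2).ne')
  obtain ⟨L, hL⟩ := isCompact_Icc.bddAbove_image hlam_cont
  obtain ⟨M, hM⟩ := isCompact_Icc.bddAbove_image hμ_cont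
  have hexp : ∀ l : Filter ℝ, Ioo (a/b) (c/d) ∈ l →
      Tendsto (fun x => ∫ y in x₀..x, f y) l atBot → Tendsto h l (𝓝 0) := fun l hl htend =>
    (tendsto_exp_atBot.comp htend).congr' (eventually_of_mem hl fun x hx => (hdef x hx).symm)
  constructor
  · refine hexp _ (Ioo_mem_nhdsGT (hx₀.1.trans hx₀.2)) <|
      tendsto_integral_nhdsGT_atBot hx₀.1 (div_pos hC hb) (K := M / d / (c/d - x₀))
        (hf_cont.mono fun y hy => ⟨hy.1, hy.2.trans_lt hx₀.2⟩) fun y hy => ?_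
    have hyI : y ∈ Icc (a/b) (c/d) := ⟨hy.1.le, hy.2.trans hx₀.2.le⟩
    have hM_nonneg : 0 ≤ M := (hC.trans_le (hμ y hyI)).le.trans (hM (mem_image_of_mem μ hyI))
    have hx₀_pos : 0 < c/d - x₀ := sub_pos.2 hx₀.2
    have hy_pos : 0 < y - a/b := sub_pos.2 hy.1
    dsimp only [f]
    gcongr
    exacts [hlam y hyI, hM (mem_image_of_mem μ hyI), hy.2]
  · refine hexp _ (Ioo_mem_nhdsLT (hx₀.1.trans hx₀.2)) <|
      tendsto_integral_nhdsLT_atBot hx₀.2 (div_pos hC hd) (K := L / b / (x₀ - a/b))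
        (hf_cont.mono fun y hy => ⟨hx₀.1.trans_le hy.1, hy.2⟩) fun y hy => ?_
    have hyI : y ∈ Icc (a/b) (c/d) := ⟨hx₀.1.le.trans hy.1, hy.2.le⟩
    have hL_nonneg : 0 ≤ L := (hC.trans_le (hlam y hyI)).le.trans (hL (mem_image_of_mem lam hyI))
    have hx₀_pos : 0 < x₀ - a/b := sub_pos.2 hx₀.1
    have hy_pos : 0 < c/d - y := sub_pos.2 hy.2
    dsimp only [f]
    gcongr
    exacts [hL (mem_image_of_mem lam hyI), hy.1, hμ y hyI]

theorem stmt_3 (a b c d C x₀ : ℝ) (lam μ : ℝ → ℝ)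
    (hb : 0 < b) (hd : 0 < d) (habcd : a * d < b * c) (hC : 0 < C)
    (hlam_cont : ContinuousOn lam (Icc (a/b) (c/d)))
    (hμ_cont : ContinuousOn μ (Icc (a/b) (c/d)))
    (hlam : ∀ x ∈ Icc (a/b) (c/d), C ≤ lam x)
    (hμ : ∀ x ∈ Icc (a/b) (c/d), C ≤ μ x)
    (hx₀ : x₀ ∈ Ioo (a/b) (c/d))
    (h : ℝ → ℝ)
    (hdef : ∀ x ∈ Ioo (a/b) (c/d),
      h x = Real.exp (∫ y in x₀..x, (lam y / (b*y - a) - μ y / (c - d*y)))) :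
    Tendsto h (nhdsWithin (a/b) (Ioi (a/b))) (nhds 0) ∧
    Tendsto h (nhdsWithin (c/d) (Iio (c/d))) (nhds 0) :=
  stmt_3_general a b c d C x₀ lam μ hb hd hC hlam_cont hμ_cont hlam hμ hx₀ h hdef
end

section
/- Assume ad < bc, b,d > 0, λ, μ continuous and strictly positive on [a/b, c/d]. Define for x ∈ (a/b, c/d): ψ₁(x) = K/(bx−a) · exp(∫_{x₀}^x (λ(y)/(by−a) − μ(y)/(c−dy)) dy) and ψ₂(x) = K/(c−dx) · exp(∫_{x₀}^x (λ(y)/(by−a) − μ(y)/(c−dy)) dy), with K > 0 and x₀ ∈ (a/b, c/d). Then (ψ₁, ψ₂) satisfies the stationary system: d/dx[(a−bx)ψ₁(x)] = −λ(x)ψ₁(x) + μ(x)ψ₂(x) and d/dx[(c−dx)ψ₂(x)] = λ(x)ψ₁(x) − μ(x)ψ₂(x) for all x ∈ (a/b, c/d). -/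
open Set Filter MeasureTheory intervalIntegral
open scoped Topology

/-! Writing `Φ t = K exp (∫_{x₀}^t g)` for the integrand `g`, the two fluxes are
`(a - b x) ψ₁ = -Φ` and `(c - d x) ψ₂ = Φ`, so both have derivative `∓ Φ g`; and `Φ g`
expands to exactly `λ ψ₁ - μ ψ₂`. -/

section Denominators

variable {𝕜 : Type*} [Field 𝕜] [LinearOrder 𝕜] [IsStrictOrderedRing 𝕜] {a b y : 𝕜}

lemma mul_sub_pos_of_div_lt (hb : 0 < b) (h : a / b < y) : 0 < b * y - a := by
  rw [div_lt_iff₀ hb] at h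
  linarith

lemma sub_mul_pos_of_lt_div (hb : 0 < b) (h : y < a / b) : 0 < a - b * y := by
  rw [lt_div_iff₀ hb] at h
  linarith

end Denominators

lemma hasDerivAt_integral_of_continuousOn {E : Type*} [NormedAddCommGroup E] [NormedSpace ℝ E]
    [CompleteSpace E] {g : ℝ → E} {s : Set ℝ} {x₀ x : ℝ} (hs : IsOpen s) (hs' : s.OrdConnected)
    (hg : ContinuousOn g s) (hx₀ : x₀ ∈ s) (hx : x ∈ s) :
    HasDerivAt (fun t => ∫ y in x₀..t, g y) (g x) x :=
  integral_hasDerivAt_right ((hg.mono (hs'.uIcc_subset hx₀ hx)).intervalIntegrable)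
    (hg.stronglyMeasurableAtFilter hs x hx) (hg.continuousAt (hs.mem_nhds hx))

theorem stmt_4_general (a b c d K x₀ : ℝ) (lam μ : ℝ → ℝ)
    (hb : 0 < b) (hd : 0 < d)
    (hx₀ : x₀ ∈ Ioo (a/b) (c/d))
    (hlam_cont : ContinuousOn lam (Icc (a/b) (c/d)))
    (hμ_cont : ContinuousOn μ (Icc (a/b) (c/d)))
    (ψ₁ ψ₂ : ℝ → ℝ)
    (hψ₁ : ∀ x ∈ Ioo (a/b) (c/d),
      ψ₁ x = K / (b*x - a) *
        Real.exp (∫ y in x₀..x, (lam y / (b*y - a) - μ y / (c - d*y))))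
    (hψ₂ : ∀ x ∈ Ioo (a/b) (c/d),
      ψ₂ x = K / (c - d*x) *
        Real.exp (∫ y in x₀..x, (lam y / (b*y - a) - μ y / (c - d*y)))) :
    ∀ x ∈ Ioo (a/b) (c/d),
      HasDerivAt (fun y => (a - b*y) * ψ₁ y) (-(lam x) * ψ₁ x + μ x * ψ₂ x) x ∧
      HasDerivAt (fun y => (c - d*y) * ψ₂ y) (lam x * ψ₁ x - μ x * ψ₂ x) x := by
  have hden₁ (y) (hy : y ∈ Ioo (a/b) (c/d)) : b*y - a ≠ 0 := (mul_sub_pos_of_div_lt hb hy.1).ne'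
  have hden₂ (y) (hy : y ∈ Ioo (a/b) (c/d)) : c - d*y ≠ 0 := (sub_mul_pos_of_lt_div hd hy.2).ne'
  set g := fun y => lam y / (b*y - a) - μ y / (c - d*y)
  have hg : ContinuousOn g (Ioo (a/b) (c/d)) :=
    ((hlam_cont.mono Ioo_subset_Icc_self).div (by fun_prop) hden₁).sub
      ((hμ_cont.mono Ioo_subset_Icc_self).div (by fun_prop) hden₂)
  set Φ := fun t => K * Real.exp (∫ y in x₀..t, g y)
  intro x hx
  have hΦ : HasDerivAt Φ (Φ x * g x) x := by
    simpa only [Φ, mul_assoc] using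
      ((hasDerivAt_integral_of_continuousOn isOpen_Ioo ordConnected_Ioo hg hx₀ hx).exp).const_mul K
  have hflux₁ : (fun y => (a - b*y) * ψ₁ y) =ᶠ[𝓝 x] fun y => -Φ y := by
    filter_upwards [isOpen_Ioo.mem_nhds hx] with y hy
    rw [hψ₁ y hy, ← neg_sub, neg_mul, ← mul_assoc, mul_div_cancel₀ _ (hden₁ y hy)]
  have hflux₂ : (fun y => (c - d*y) * ψ₂ y) =ᶠ[𝓝 x] Φ := by
    filter_upwards [isOpen_Ioo.mem_nhds hx] with y hy
    rw [hψ₂ y hy, ← mul_assoc, mul_div_cancel₀ _ (hden₂ y hy)]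
  rw [hψ₁ x hx, hψ₂ x hx]
  exact ⟨(hΦ.neg.congr_of_eventuallyEq hflux₁).congr_deriv (by simp only [Φ, g]; ring),
    (hΦ.congr_of_eventuallyEq hflux₂).congr_deriv (by simp only [Φ, g]; ring)⟩

theorem stmt_4 (a b c d K x₀ : ℝ) (lam μ : ℝ → ℝ)
    (hb : 0 < b) (hd : 0 < d) (habcd : a * d < b * c)
    (hK : 0 < K) (hx₀ : x₀ ∈ Ioo (a/b) (c/d))
    (hlam_cont : ContinuousOn lam (Icc (a/b) (c/d)))
    (hμ_cont : ContinuousOn μ (Icc (a/b) (c/d)))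
    (hlam : ∀ x ∈ Icc (a/b) (c/d), 0 < lam x)
    (hμ : ∀ x ∈ Icc (a/b) (c/d), 0 < μ x)
    (ψ₁ ψ₂ : ℝ → ℝ)
    (hψ₁ : ∀ x ∈ Ioo (a/b) (c/d),
      ψ₁ x = K / (b*x - a) *
        Real.exp (∫ y in x₀..x, (lam y / (b*y - a) - μ y / (c - d*y))))
    (hψ₂ : ∀ x ∈ Ioo (a/b) (c/d),
      ψ₂ x = K / (c - d*x) *
        Real.exp (∫ y in x₀..x, (lam y / (b*y - a) - μ y / (c - d*y)))) :
    ∀ x ∈ Ioo (a/b) (c/d),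
      HasDerivAt (fun y => (a - b*y) * ψ₁ y) (-(lam x) * ψ₁ x + μ x * ψ₂ x) x ∧
      HasDerivAt (fun y => (c - d*y) * ψ₂ y) (lam x * ψ₁ x - μ x * ψ₂ x) x :=
  stmt_4_general a b c d K x₀ lam μ hb hd hx₀ hlam_cont hμ_cont ψ₁ ψ₂ hψ₁ hψ₂
end

section
/- Let p ∈ W^{1,1}(α,β) with p > 0 on (α,β) and p(α) = 0, and let f ∈ L¹(α,β) such that pf ∈ W^{1,1}(α,β) and f(β) = 0 (i.e. (pf)(β) = 0). Then ∫_α^β (pf)'(x) · sgn(f(x)) dx = 0. -/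
open Set Filter MeasureTheory Topology

/-- right derivative of |g| at a zero of g -/
lemma abs_hasDerivWithinAt_Ioi {g : ℝ → ℝ} {c x : ℝ} (hg : HasDerivAt g c x) (hx : g x = 0) :
    HasDerivWithinAt (fun y => |g y|) |c| (Ioi x) x := by
  rw [hasDerivWithinAt_iff_tendsto_slope]
  have h1 : Tendsto (slope g x) (𝓝[≠] x) (𝓝 c) := hasDerivAt_iff_tendsto_slope.1 hg
  have h2 : Tendsto (fun y => |slope g x y|) (𝓝[Ioi x \ {x}] x) (𝓝 |c|) :=
    (continuous_abs.tendsto c).comp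
      (h1.mono_left (nhdsWithin_mono x (fun y hy => hy.2)))
  refine h2.congr' ?_
  filter_upwards [self_mem_nhdsWithin] with y hy
  have hyx : x < y := hy.1
  simp only [slope_def_field, hx, abs_zero, sub_zero]
  rw [abs_div, abs_of_pos (sub_pos.2 hyx)]

/-- derivative of |g| where g ≠ 0 -/
lemma abs_hasDerivAt {g : ℝ → ℝ} {c x : ℝ} (hg : HasDerivAt g c x) (hx : g x ≠ 0) :
    HasDerivAt (fun y => |g y|) (c * Real.sign (g x)) x := by
  rcases hx.lt_or_gt with h | h
  · have hev : ∀ᶠ y in 𝓝 x, g y < 0 :=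
      hg.continuousAt.preimage_mem_nhds (Iio_mem_nhds h)
    have : HasDerivAt (fun y => -g y) (-c) x := hg.neg
    rw [Real.sign_of_neg h, mul_neg_one]
    refine this.congr_of_eventuallyEq ?_
    filter_upwards [hev] with y hy
    rw [abs_of_neg hy]
  · have hev : ∀ᶠ y in 𝓝 x, 0 < g y :=
      hg.continuousAt.preimage_mem_nhds (Ioi_mem_nhds h)
    rw [Real.sign_of_pos h, mul_one]
    refine hg.congr_of_eventuallyEq ?_
    filter_upwards [hev] with y hy
    rw [abs_of_pos hy]

lemma measurable_real_sign : Measurable Real.sign := by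
  have : Real.sign = fun r : ℝ => if r < 0 then (-1:ℝ) else if 0 < r then 1 else 0 := by
    funext r; rw [Real.sign]
  rw [this]
  exact Measurable.ite measurableSet_Iio measurable_const
    (Measurable.ite measurableSet_Ioi measurable_const measurable_const)

lemma abs_real_sign_le (r : ℝ) : |Real.sign r| ≤ 1 := by
  rcases lt_trichotomy r 0 with h | h | h
  · simp [Real.sign_of_neg h]
  · simp [h, Real.sign_zero]
  · simp [Real.sign_of_pos h]

/-- countability of isolated zeros with nonzero derivative -/
lemma countable_bad {g g' : ℝ → ℝ} {a b : ℝ}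
    (hderiv : ∀ x ∈ Ioo a b, HasDerivAt g (g' x) x) :
    Set.Countable {x | x ∈ Ioo a b ∧ g x = 0 ∧ g' x ≠ 0} := by
  set S := {x | x ∈ Ioo a b ∧ g x = 0 ∧ g' x ≠ 0} with hS
  have key : ∀ x ∈ S, ∃ q r : ℚ, (q:ℝ) < x ∧ x < r ∧
      ∀ y ∈ S, (q:ℝ) < y → (y:ℝ) < r → y = x := by
    rintro x ⟨hx, hgx, hg'x⟩
    have h1 : Tendsto (slope g x) (𝓝[≠] x) (𝓝 (g' x)) :=
      hasDerivAt_iff_tendsto_slope.1 (hderiv x hx)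
    have h2 : ∀ᶠ y in 𝓝[≠] x, slope g x y ≠ 0 := h1.eventually_ne hg'x
    rw [eventually_nhdsWithin_iff] at h2
    rw [Metric.eventually_nhds_iff] at h2
    obtain ⟨ε, hε, hball⟩ := h2
    obtain ⟨q, hq1, hq2⟩ := exists_rat_btwn (show x - ε < x by linarith)
    obtain ⟨r, hr1, hr2⟩ := exists_rat_btwn (show x < x + ε by linarith)
    refine ⟨q, r, hq2, hr1, fun y hy hyq hyr => ?_⟩
    by_contra hne
    have hdist : dist y x < ε := by
      rw [Real.dist_eq, abs_lt]; constructor <;> linarith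
    have := hball hdist hne
    rw [slope_def_field, hgx, hy.2.1, sub_zero, zero_div] at this
    exact this rfl
  choose! q r hq hr huniq using key
  have hinj : Set.InjOn (fun x => (q x, r x)) S := by
    intro x hx y hy hxy
    simp only [Prod.mk.injEq] at hxy
    have h1 := huniq x hx y hy
    rw [hxy.1, hxy.2] at h1
    exact (h1 (hq y hy) (hr y hy)).symm
  exact Set.countable_of_injective_of_countable_image hinj
    (Set.Countable.mono (Set.subset_univ _) Set.countable_univ)

/-- `p ∈ W^{1,1}` with `p > 0` on `(α,β)`, `p(α) = 0`; `f ∈ L¹` with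
`pf ∈ W^{1,1}` (represented by the product `F = p·f` being differentiable on the
open interval with integrable derivative `F'` and continuous on `[α,β]`), and
`(pf)(β) = 0`. Then `∫ (pf)' · sgn f = 0`. -/
theorem stmt_9 (α β : ℝ) (p f F' : ℝ → ℝ) (hαβ : α < β)
    (hp_cont : ContinuousOn p (Icc α β))
    (hp_pos : ∀ x ∈ Ioo α β, 0 < p x)
    (hpα : p α = 0)
    (hf_int : IntegrableOn f (Ioo α β))
    (hF_cont : ContinuousOn (fun x => p x * f x) (Icc α β))
    (hF_deriv : ∀ x ∈ Ioo α β, HasDerivAt (fun y => p y * f y) (F' x) x)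
    (hF'_int : IntegrableOn F' (Ioo α β))
    (hFβ : p β * f β = 0) :
    ∫ x in Ioo α β, F' x * Real.sign (f x) = 0 := by
  set F : ℝ → ℝ := fun x => p x * f x with hF
  have hFα : F α = 0 := by simp [hF, hpα]
  -- the a.e.-modified derivative of |F|
  set G' : ℝ → ℝ := fun x => if F x = 0 then |F' x| else F' x * Real.sign (F x) with hG'
  -- |F| has right derivative G' on Ioo
  have habs_deriv : ∀ x ∈ Ioo α β, HasDerivWithinAt (fun y => |F y|) (G' x) (Ioi x) x := by
    intro x hx
    by_cases h0 : F x = 0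
    · rw [hG']; simp only [h0, if_pos rfl]
      exact abs_hasDerivWithinAt_Ioi (hF_deriv x hx) h0
    · rw [hG']; simp only [h0, if_neg h0]
      exact (abs_hasDerivAt (hF_deriv x hx) h0).hasDerivWithinAt
  -- bad set is countable, hence null
  have hbad : Set.Countable {x | x ∈ Ioo α β ∧ F x = 0 ∧ F' x ≠ 0} :=
    countable_bad hF_deriv
  have hbad_null : volume {x | x ∈ Ioo α β ∧ F x = 0 ∧ F' x ≠ 0} = 0 :=
    hbad.measure_zero _
  -- a.e. equality of G' with the integrand on Ioo
  have hae : (fun x => F' x * Real.sign (f x))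
      =ᵐ[volume.restrict (Ioo α β)] G' := by
    have h1 : ∀ᵐ x ∂(volume.restrict (Ioo α β)),
        x ∉ {x | x ∈ Ioo α β ∧ F x = 0 ∧ F' x ≠ 0} := by
      refine (ae_restrict_of_ae ?_)
      rw [ae_iff]
      exact measure_mono_null (fun a ha => not_not.1 ha) hbad_null
    have h2 : ∀ᵐ x ∂(volume.restrict (Ioo α β)), x ∈ Ioo α β :=
      ae_restrict_mem measurableSet_Ioo
    filter_upwards [h1, h2] with x hxS hx
    have hpx := hp_pos x hx
    by_cases h0 : F x = 0
    · have hF'0 : F' x = 0 := by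
        by_contra hne
        exact hxS ⟨hx, h0, hne⟩
      rw [hG']; simp [h0, hF'0]
    · have hsign : Real.sign (F x) = Real.sign (f x) := by
        rcases lt_trichotomy (f x) 0 with hf0 | hf0 | hf0
        · rw [Real.sign_of_neg hf0,
            Real.sign_of_neg (mul_neg_of_pos_of_neg hpx hf0)]
        · exact absurd (by simp [hF, hf0]) h0
        · rw [Real.sign_of_pos hf0, Real.sign_of_pos (mul_pos hpx hf0)]
      rw [hG']; simp only [if_neg h0, hsign]
  -- integrability of the integrand
  have hmeas : AEStronglyMeasurable (fun x => F' x * Real.sign (f x))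
      (volume.restrict (Ioo α β)) := by
    refine (hF'_int.1.mul ?_)
    exact (measurable_real_sign.comp_aemeasurable
      hf_int.1.aemeasurable).aestronglyMeasurable
  have hint : IntegrableOn (fun x => F' x * Real.sign (f x)) (Ioo α β) := by
    refine hF'_int.norm.mono' hmeas ?_
    refine Filter.Eventually.of_forall fun x => ?_
    rw [norm_mul]
    calc ‖F' x‖ * ‖Real.sign (f x)‖ ≤ ‖F' x‖ * 1 :=
          mul_le_mul_of_nonneg_left (abs_real_sign_le _) (norm_nonneg _)
      _ = ‖F' x‖ := mul_one _
  have hG'int : IntegrableOn G' (Ioo α β) := hint.congr_fun_ae hae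
  have hG'int_Icc : IntegrableOn G' (Icc α β) := by
    unfold IntegrableOn
    rw [← Measure.restrict_congr_set Ioo_ae_eq_Icc]
    exact hG'int
  have hzero : ∫ y in α..β, G' y = 0 := by
    have h := intervalIntegral.integral_eq_sub_of_hasDeriv_right_of_le hαβ.le
      hF_cont.abs habs_deriv
      ((intervalIntegrable_iff_integrableOn_Icc_of_le hαβ.le).2 hG'int_Icc)
    rw [h, hFα]
    have : F β = 0 := hFβ
    rw [this]
    simp
  rw [integral_congr_ae hae, ← integral_Ioc_eq_integral_Ioo,
    ← intervalIntegral.integral_of_le hαβ.le]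
  exact hzero
end

section
/- Assume ad < bc, b,d > 0, and λ(x) = lx + k, μ(x) = mx + n are affine with λ, μ > 0 on [a/b, c/d]. Then the functions ψ₁(x) = (K/b) e^{(l/b + m/d)x} (x − a/b)^{al/b² + k/b − 1} (c/d − x)^{cm/d² + n/d} and ψ₂(x) = (K/d) e^{(l/b + m/d)x} (x − a/b)^{al/b² + k/b} (c/d − x)^{cm/d² + n/d − 1} satisfy the stationary system d/dx[(a−bx)ψ₁] = −λψ₁ + μψ₂ and d/dx[(c−dx)ψ₂] = λψ₁ − μψ₂ on (a/b, c/d). -/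
open Set Real Filter Topology

/-!
Both fluxes are multiples of one function: with `Φ x = e^{γx} (x - a/b)^p (c/d - x)^q`, where
`γ = l/b + m/d`, `p = al/b² + k/b` and `q = cm/d² + n/d`, one has `(a - bx) ψ₁ = -K Φ` and
`(c - dx) ψ₂ = K Φ`. The system therefore reduces to the single identity `K Φ' = λ ψ₁ - μ ψ₂`,
i.e. `γ + p/(x - a/b) - q/(c/d - x) = λ(x)/(b (x - a/b)) - μ(x)/(d (c/d - x))`, which is how
`γ`, `p` and `q` were chosen.
-/

noncomputable def expRpowWeight (γ α β p q x : ℝ) : ℝ :=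
  exp (γ * x) * (x - α) ^ p * (β - x) ^ q

section

variable {γ α β p q x : ℝ}

theorem expRpowWeight_sub_one_left (hx : x ≠ α) :
    expRpowWeight γ α β (p - 1) q x = expRpowWeight γ α β p q x / (x - α) := by
  rw [expRpowWeight, expRpowWeight, rpow_sub_one (sub_ne_zero.mpr hx)]
  ring

theorem expRpowWeight_sub_one_right (hx : x ≠ β) :
    expRpowWeight γ α β p (q - 1) x = expRpowWeight γ α β p q x / (β - x) := by
  rw [expRpowWeight, expRpowWeight, rpow_sub_one (sub_ne_zero.mpr hx.symm)]
  ring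

theorem hasDerivAt_expRpowWeight (hα : x ≠ α) (hβ : x ≠ β) :
    HasDerivAt (expRpowWeight γ α β p q)
      (expRpowWeight γ α β p q x * (γ + p / (x - α) - q / (β - x))) x := by
  have hu : x - α ≠ 0 := sub_ne_zero.mpr hα
  have hv : β - x ≠ 0 := sub_ne_zero.mpr hβ.symm
  have hE : HasDerivAt (fun y => exp (γ * y)) (exp (γ * x) * γ) x := by
    simpa using ((hasDerivAt_id x).const_mul γ).exp
  have hU : HasDerivAt (fun y => (y - α) ^ p) (1 * p * (x - α) ^ (p - 1)) x :=
    ((hasDerivAt_id x).sub_const α).rpow_const (Or.inl hu)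
  have hV : HasDerivAt (fun y => (β - y) ^ q) (-1 * q * (β - x) ^ (q - 1)) x :=
    ((hasDerivAt_id x).const_sub β).rpow_const (Or.inl hv)
  refine ((hE.mul hU).mul hV).congr_deriv ?_
  rw [expRpowWeight, Pi.mul_apply, rpow_sub_one hu, rpow_sub_one hv]
  field_simp
  ring

variable {a b c d l k m n K : ℝ}

theorem mul_ne_of_ne_div (hb : b ≠ 0) (hx : x ≠ a / b) : b * x ≠ a := by
  rw [mul_comm]
  exact (eq_div_iff hb).not.mp hx

theorem sub_mul_mul_expRpowWeight_sub_one_left (hb : b ≠ 0) (hx : x ≠ a / b) :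
    (a - b * x) * (K / b * expRpowWeight γ (a / b) β (p - 1) q x)
      = -(K * expRpowWeight γ (a / b) β p q x) := by
  have hu : b * x - a ≠ 0 := sub_ne_zero.mpr (mul_ne_of_ne_div hb hx)
  rw [expRpowWeight_sub_one_left hx]
  field_simp
  ring

theorem sub_mul_mul_expRpowWeight_sub_one_right (hd : d ≠ 0) (hx : x ≠ c / d) :
    (c - d * x) * (K / d * expRpowWeight γ α (c / d) p (q - 1) x)
      = K * expRpowWeight γ α (c / d) p q x := by
  have hv : c - d * x ≠ 0 := sub_ne_zero.mpr (mul_ne_of_ne_div hd hx).symm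
  rw [expRpowWeight_sub_one_right hx]
  field_simp

theorem hasDerivAt_const_mul_expRpowWeight_stationary (hb : b ≠ 0) (hd : d ≠ 0)
    (hxa : x ≠ a / b) (hxc : x ≠ c / d) :
    HasDerivAt
      (fun y => K * expRpowWeight (l/b + m/d) (a/b) (c/d) (a*l/b^2 + k/b) (c*m/d^2 + n/d) y)
      ((l * x + k) *
          (K / b * expRpowWeight (l/b + m/d) (a/b) (c/d) (a*l/b^2 + k/b - 1) (c*m/d^2 + n/d) x) -
        (m * x + n) *
          (K / d * expRpowWeight (l/b + m/d) (a/b) (c/d) (a*l/b^2 + k/b) (c*m/d^2 + n/d - 1) x))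
      x := by
  have hu : b * x - a ≠ 0 := sub_ne_zero.mpr (mul_ne_of_ne_div hb hxa)
  have hv : c - d * x ≠ 0 := sub_ne_zero.mpr (mul_ne_of_ne_div hd hxc).symm
  refine ((hasDerivAt_expRpowWeight hxa hxc).const_mul K).congr_deriv ?_
  rw [expRpowWeight_sub_one_left hxa, expRpowWeight_sub_one_right hxc]
  field_simp
  ring

end

theorem stmt_14_general (a b c d l k m n K : ℝ)
    (hb : 0 < b) (hd : 0 < d)
    (ψ₁ ψ₂ : ℝ → ℝ)
    (hψ₁ : ∀ x ∈ Ioo (a/b) (c/d),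
      ψ₁ x = (K / b) * Real.exp ((l/b + m/d) * x) *
        (x - a/b) ^ (a*l/b^2 + k/b - 1) * (c/d - x) ^ (c*m/d^2 + n/d))
    (hψ₂ : ∀ x ∈ Ioo (a/b) (c/d),
      ψ₂ x = (K / d) * Real.exp ((l/b + m/d) * x) *
        (x - a/b) ^ (a*l/b^2 + k/b) * (c/d - x) ^ (c*m/d^2 + n/d - 1)) :
    ∀ x ∈ Ioo (a/b) (c/d),
      HasDerivAt (fun y => (a - b*y) * ψ₁ y)
        (-(l * x + k) * ψ₁ x + (m * x + n) * ψ₂ x) x ∧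
      HasDerivAt (fun y => (c - d*y) * ψ₂ y)
        ((l * x + k) * ψ₁ x - (m * x + n) * ψ₂ x) x := by
  intro x hx
  set W := expRpowWeight (l/b + m/d) (a/b) (c/d)
  have hψ₁W : ∀ y ∈ Ioo (a/b) (c/d), ψ₁ y = K / b * W (a*l/b^2 + k/b - 1) (c*m/d^2 + n/d) y :=
    fun y hy => by rw [hψ₁ y hy]; simp only [W, expRpowWeight]; ring
  have hψ₂W : ∀ y ∈ Ioo (a/b) (c/d), ψ₂ y = K / d * W (a*l/b^2 + k/b) (c*m/d^2 + n/d - 1) y :=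
    fun y hy => by rw [hψ₂ y hy]; simp only [W, expRpowWeight]; ring
  have hflux₁ : (fun y => (a - b*y) * ψ₁ y) =ᶠ[𝓝 x]
      fun y => -(K * W (a*l/b^2 + k/b) (c*m/d^2 + n/d) y) := by
    filter_upwards [Ioo_mem_nhds hx.1 hx.2] with y hy
    rw [hψ₁W y hy, sub_mul_mul_expRpowWeight_sub_one_left hb.ne' hy.1.ne']
  have hflux₂ : (fun y => (c - d*y) * ψ₂ y) =ᶠ[𝓝 x]
      fun y => K * W (a*l/b^2 + k/b) (c*m/d^2 + n/d) y := by
    filter_upwards [Ioo_mem_nhds hx.1 hx.2] with y hy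
    rw [hψ₂W y hy, sub_mul_mul_expRpowWeight_sub_one_right hd.ne' hy.2.ne]
  have hΦ : HasDerivAt (fun y => K * W (a*l/b^2 + k/b) (c*m/d^2 + n/d) y)
      ((l * x + k) * ψ₁ x - (m * x + n) * ψ₂ x) x := by
    rw [hψ₁W x hx, hψ₂W x hx]
    exact hasDerivAt_const_mul_expRpowWeight_stationary hb.ne' hd.ne' hx.1.ne' hx.2.ne
  exact ⟨(hΦ.neg.congr_of_eventuallyEq hflux₁).congr_deriv (by ring),
    hΦ.congr_of_eventuallyEq hflux₂⟩

theorem stmt_14 (a b c d l k m n K : ℝ)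
    (hb : 0 < b) (hd : 0 < d) (habcd : a * d < b * c) (hK : 0 < K)
    (hlam : ∀ x ∈ Icc (a/b) (c/d), 0 < l * x + k)
    (hμ : ∀ x ∈ Icc (a/b) (c/d), 0 < m * x + n)
    (ψ₁ ψ₂ : ℝ → ℝ)
    (hψ₁ : ∀ x ∈ Ioo (a/b) (c/d),
      ψ₁ x = (K / b) * Real.exp ((l/b + m/d) * x) *
        (x - a/b) ^ (a*l/b^2 + k/b - 1) * (c/d - x) ^ (c*m/d^2 + n/d))
    (hψ₂ : ∀ x ∈ Ioo (a/b) (c/d),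
      ψ₂ x = (K / d) * Real.exp ((l/b + m/d) * x) *
        (x - a/b) ^ (a*l/b^2 + k/b) * (c/d - x) ^ (c*m/d^2 + n/d - 1)) :
    ∀ x ∈ Ioo (a/b) (c/d),
      HasDerivAt (fun y => (a - b*y) * ψ₁ y)
        (-(l * x + k) * ψ₁ x + (m * x + n) * ψ₂ x) x ∧
      HasDerivAt (fun y => (c - d*y) * ψ₂ y)
        ((l * x + k) * ψ₁ x - (m * x + n) * ψ₂ x) x :=
  stmt_14_general a b c d l k m n K hb hd ψ₁ ψ₂ hψ₁ hψ₂
end
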